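/- The number of forests on the labelled vertex set {1,...,n} (n ≥ 2) consisting of exactly two trees, with vertices 1 and 2 in different trees, and such that in each tree the vertex labels strictly increase along every path starting from vertex 1 (in the tree containing 1) or from vertex 2 (in the tree containing 2), is exactly (n−1)!. -/

import Mathlib

/-!
An increasing forest with root set `R` is determined by its parent map: each vertex `v ∉ R`
has exactly one smaller neighbour, its predecessor on the increasing path from its root, while
the roots have none. Conversely, any map fixing `R` and sending every other vertex to a
smaller one generates an increasing forest. With the roots `0, 1` of `Fin n`, vertex `v ≥ 2`
has `v` possible parents, giving `2 ⋯ (n - 1) = (n - 1)!` forests.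
-/

/-- Labels strictly increase along every path starting from `r` in `G`. -/
def IncreasingFrom {n : ℕ} (G : SimpleGraph (Fin n)) (r : Fin n) : Prop :=
  ∀ (v : Fin n) (p : G.Walk r v), p.IsPath → List.Chain' (· < ·) p.support

open SimpleGraph

namespace SimpleGraph.Walk

variable {V : Type*} [LinearOrder V] {G : SimpleGraph V}

lemma le_of_mem_support_of_isChain {u v x : V} {p : G.Walk u v}
    (hp : p.support.IsChain (· < ·)) (hx : x ∈ p.support) : x ≤ v := by
  induction p generalizing x with
  | nil => simp_all
  | cons h q ih =>
    rw [support_cons] at hp hx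
    obtain ⟨hhead, hq⟩ := List.isChain_cons.mp hp
    rcases List.mem_cons.mp hx with rfl | hx
    · exact (hhead _ (by rw [← q.cons_tail_support]; rfl)).le.trans (ih hq q.start_mem_support)
    · exact ih hq hx

lemma penultimate_lt_of_isChain {u v : V} {p : G.Walk u v}
    (hp : p.support.IsChain (· < ·)) (hnil : ¬p.Nil) : p.penultimate < v :=
  (le_of_mem_support_of_isChain hp (p.getVert_mem_support _)).lt_of_ne (adj_penultimate hnil).ne

end SimpleGraph.Walk

namespace SimpleGraph

lemma card_connectedComponent_eq_two_iff {V : Type*} {G : SimpleGraph V} {a b : V}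
    (hab : ¬G.Reachable a b) :
    Nat.card G.ConnectedComponent = 2 ↔ ∀ v, G.Reachable a v ∨ G.Reachable b v := by
  have hab' : G.connectedComponentMk a ≠ G.connectedComponentMk b :=
    mt ConnectedComponent.exact hab
  rw [Nat.card_eq_two_iff]
  constructor
  · rintro ⟨x, y, -, hxy⟩ v
    have hmem : ∀ c : G.ConnectedComponent, c = x ∨ c = y := fun c => by
      have hc : c ∈ ({x, y} : Set _) := hxy ▸ Set.mem_univ c
      simpa using hc
    simp only [← ConnectedComponent.eq]
    have := hmem (G.connectedComponentMk a)
    have := hmem (G.connectedComponentMk b)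
    have := hmem (G.connectedComponentMk v)
    grind
  · intro h
    refine ⟨_, _, hab', Set.eq_univ_of_forall fun c => ?_⟩
    induction c using ConnectedComponent.ind with
    | h v => simpa [ConnectedComponent.eq, reachable_comm] using h v

end SimpleGraph

lemma prod_range_max_one_eq_factorial (n : ℕ) :
    ∏ i ∈ Finset.range n, max 1 i = Nat.factorial (n - 1) := by
  cases n with
  | zero => rfl
  | succ m => simp [Finset.prod_range_succ', Finset.prod_range_add_one_eq_factorial]

section Forests

variable {n : ℕ}

section IncreasingFrom

variable {G : SimpleGraph (Fin n)} {r v w : Fin n}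

lemma IncreasingFrom.lt_of_adj (h : IncreasingFrom G r) (hadj : G.Adj r w) : r < w :=
  List.isChain_pair.mp (h w (.cons hadj .nil) (by simp [hadj.ne]))

lemma IncreasingFrom.exists_adj_lt (h : IncreasingFrom G r) (hrv : G.Reachable r v)
    (hne : r ≠ v) : ∃ w, G.Adj v w ∧ w < v := by
  obtain ⟨p, hp⟩ := hrv.some.toPath
  have hnil : ¬p.Nil := fun hnil => hne hnil.eq
  exact ⟨p.penultimate, (p.adj_penultimate hnil).symm,
    Walk.penultimate_lt_of_isChain (h v p hp) hnil⟩

/-- An increasing path from `r` to a smaller neighbour of `v` avoids `v`, so extending it by `v`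
gives a path, which in an acyclic graph must be `P`. -/
lemma IncreasingFrom.eq_penultimate_of_adj_lt (hG : G.IsAcyclic) (h : IncreasingFrom G r)
    {P : G.Walk r v} (hP : P.IsPath) (hadj : G.Adj v w) (hwv : w < v) : w = P.penultimate := by
  obtain ⟨p, hp⟩ := (P.reachable.trans hadj.reachable).some.toPath
  have hv : v ∉ p.support := fun hv =>
    (Walk.le_of_mem_support_of_isChain (h w p hp) hv).not_gt hwv
  have := (hG.subsingleton_path r v).elim ⟨P, hP⟩ ⟨_, hp.concat hv hadj.symm⟩
  rw [show P = p.concat hadj.symm from congrArg Subtype.val this, Walk.penultimate_concat]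

end IncreasingFrom

structure IsIncreasingForest (R : Finset (Fin n)) (G : SimpleGraph (Fin n)) : Prop where
  isAcyclic : G.IsAcyclic
  exists_root_reachable : ∀ v, ∃ r ∈ R, G.Reachable r v
  not_reachable : (R : Set (Fin n)).Pairwise fun r s => ¬ G.Reachable r s
  increasingFrom : ∀ r ∈ R, IncreasingFrom G r

def IsParentMap (R : Finset (Fin n)) (f : Fin n → Fin n) : Prop :=
  ∀ v, if v ∈ R then f v = v else f v < v

def parentGraph (f : Fin n → Fin n) : SimpleGraph (Fin n) :=
  SimpleGraph.fromRel fun v w => f v = w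

namespace IsParentMap

variable {R : Finset (Fin n)} {f : Fin n → Fin n} {r v w : Fin n}

lemma apply_of_mem (hf : IsParentMap R f) (hv : v ∈ R) : f v = v := by
  simpa [hv] using hf v

lemma apply_lt (hf : IsParentMap R f) (hv : v ∉ R) : f v < v := by
  simpa [hv] using hf v

lemma eq_of_adj_of_lt (hf : IsParentMap R f) (hadj : (parentGraph f).Adj v w) (hwv : w < v) :
    f v = w := by
  obtain ⟨hne, h | h⟩ := hadj
  · exact h
  · by_cases hw : w ∈ R
    · exact absurd (h.symm.trans (hf.apply_of_mem hw)) hne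
    · exact absurd (h ▸ hf.apply_lt hw) hwv.not_gt

lemma lt_of_adj_of_mem (hf : IsParentMap R f) (hr : r ∈ R) (hadj : (parentGraph f).Adj r w) :
    r < w := by
  refine lt_of_not_ge fun hwr => hadj.ne ?_
  rw [← hf.eq_of_adj_of_lt hadj (hwr.lt_of_ne hadj.ne'), hf.apply_of_mem hr]

/-- Once a path in the parent graph steps up, it keeps going up: stepping down from `b` after
arriving from `u < b` would revisit the parent `f b = u`. -/
lemma isChain_support (hf : IsParentMap R f) {u v : Fin n} (p : (parentGraph f).Walk u v)
    (hp : p.IsPath) (hup : u ≤ p.snd) : p.support.IsChain (· < ·) := by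
  induction p with
  | nil => simp
  | @cons u b v h q ih =>
    have hub : u < b := (Walk.snd_cons q h ▸ hup).lt_of_ne h.ne
    rw [Walk.support_cons]
    refine List.IsChain.cons (ih hp.of_cons ?_) ?_
    · cases q with
      | nil => exact le_rfl
      | @cons _ c _ h' q' =>
        rw [Walk.snd_cons]
        refine le_of_not_gt fun hcb => ?_
        have huc : u = c := (hf.eq_of_adj_of_lt h.symm hub).symm.trans (hf.eq_of_adj_of_lt h' hcb)
        have hc : c ∈ (Walk.cons h' q').support := by simp
        exact ((Walk.cons_isPath_iff _ _).mp hp).2 (huc ▸ hc)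
    · intro y hy
      rw [← q.cons_tail_support] at hy
      cases hy
      exact hub

lemma increasingFrom (hf : IsParentMap R f) (hr : r ∈ R) : IncreasingFrom (parentGraph f) r :=
  fun _ p hp => hf.isChain_support p hp <| by
    cases p with
    | nil => exact le_rfl
    | cons h q => exact (Walk.snd_cons q h).symm ▸ (hf.lt_of_adj_of_mem hr h).le

/-- On a cycle, the two neighbours of its largest vertex `m` are both smaller than `m`,
hence both equal to `f m`. -/
lemma isAcyclic (hf : IsParentMap R f) : (parentGraph f).IsAcyclic := by
  intro u c hc
  classical
  obtain ⟨m, hm, hmax⟩ := c.support.toFinset.exists_max_image id ⟨u, by simp⟩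
  rw [List.mem_toFinset] at hm
  set d := c.rotate m hm
  have hd : d.IsCycle := hc.rotate hm
  have parent_eq : ∀ x ∈ d.support, (parentGraph f).Adj m x → f m = x := fun x hx hadj =>
    hf.eq_of_adj_of_lt hadj ((hmax x (by simpa [d] using hx)).lt_of_ne hadj.ne')
  exact hd.snd_ne_penultimate <|
    (parent_eq _ (d.getVert_mem_support _) (d.adj_snd hd.not_nil)).symm.trans
      (parent_eq _ (d.getVert_mem_support _) (d.adj_penultimate hd.not_nil).symm)

lemma exists_root_reachable (hf : IsParentMap R f) (v : Fin n) :
    ∃ r ∈ R, (parentGraph f).Reachable r v := by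
  induction v using WellFoundedLT.induction with
  | _ v ih =>
    by_cases hv : v ∈ R
    · exact ⟨v, hv, .rfl⟩
    · obtain ⟨r, hr, hrv⟩ := ih (f v) (hf.apply_lt hv)
      have hadj : (parentGraph f).Adj (f v) v := ⟨(hf.apply_lt hv).ne, Or.inr rfl⟩
      exact ⟨r, hr, hrv.trans hadj.reachable⟩

lemma not_reachable (hf : IsParentMap R f) :
    (R : Set (Fin n)).Pairwise fun r s => ¬ (parentGraph f).Reachable r s := by
  intro r hr s hs hne hrs
  obtain ⟨w, hadj, hws⟩ := (hf.increasingFrom hr).exists_adj_lt hrs hne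
  exact (hf.lt_of_adj_of_mem hs hadj).not_gt hws

lemma isIncreasingForest (hf : IsParentMap R f) : IsIncreasingForest R (parentGraph f) :=
  ⟨hf.isAcyclic, hf.exists_root_reachable, hf.not_reachable, fun _ hr => hf.increasingFrom hr⟩

end IsParentMap

open Classical in
noncomputable def parentOf (G : SimpleGraph (Fin n)) (v : Fin n) : Fin n :=
  if h : ∃ w, G.Adj v w ∧ w < v then h.choose else v

namespace IsIncreasingForest

variable {R : Finset (Fin n)} {G : SimpleGraph (Fin n)} {v w w₁ w₂ : Fin n}

lemma exists_adj_lt_iff (hG : IsIncreasingForest R G) :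
    (∃ w, G.Adj v w ∧ w < v) ↔ v ∉ R := by
  constructor
  · rintro ⟨w, hadj, hwv⟩ hv
    exact ((hG.increasingFrom v hv).lt_of_adj hadj).not_gt hwv
  · intro hv
    obtain ⟨r, hr, hrv⟩ := hG.exists_root_reachable v
    exact (hG.increasingFrom r hr).exists_adj_lt hrv (ne_of_mem_of_not_mem hr hv)

lemma eq_of_adj_of_lt (hG : IsIncreasingForest R G) (h₁ : G.Adj v w₁) (h₂ : G.Adj v w₂)
    (hw₁ : w₁ < v) (hw₂ : w₂ < v) : w₁ = w₂ := by
  obtain ⟨r, hr, hrv⟩ := hG.exists_root_reachable v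
  obtain ⟨P, hP⟩ := hrv.some.toPath
  have h := hG.increasingFrom r hr
  exact (h.eq_penultimate_of_adj_lt hG.isAcyclic hP h₁ hw₁).trans
    (h.eq_penultimate_of_adj_lt hG.isAcyclic hP h₂ hw₂).symm

lemma parentOf_of_mem (hG : IsIncreasingForest R G) (hv : v ∈ R) : parentOf G v = v :=
  dif_neg (hG.exists_adj_lt_iff.not_left.mpr hv)

lemma adj_parentOf (hG : IsIncreasingForest R G) (hv : v ∉ R) :
    G.Adj v (parentOf G v) ∧ parentOf G v < v := by
  have h := hG.exists_adj_lt_iff.mpr hv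
  rw [parentOf, dif_pos h]
  exact h.choose_spec

lemma isParentMap_parentOf (hG : IsIncreasingForest R G) : IsParentMap R (parentOf G) := by
  intro v
  split_ifs with hv
  · exact hG.parentOf_of_mem hv
  · exact (hG.adj_parentOf hv).2

lemma parentOf_eq_of_adj (hG : IsIncreasingForest R G) (hadj : G.Adj v w) (hwv : w < v) :
    parentOf G v = w :=
  have hv : v ∉ R := hG.exists_adj_lt_iff.mp ⟨w, hadj, hwv⟩
  hG.eq_of_adj_of_lt (hG.adj_parentOf hv).1 hadj (hG.adj_parentOf hv).2 hwv

lemma adj_parentOf_of_ne (hG : IsIncreasingForest R G) (hv : parentOf G v ≠ v) :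
    G.Adj v (parentOf G v) :=
  (hG.adj_parentOf fun hmem => hv (hG.parentOf_of_mem hmem)).1

lemma parentGraph_parentOf (hG : IsIncreasingForest R G) : parentGraph (parentOf G) = G := by
  ext v w
  rw [parentGraph, fromRel_adj]
  constructor
  · rintro ⟨hne, rfl | rfl⟩
    · exact hG.adj_parentOf_of_ne hne.symm
    · exact (hG.adj_parentOf_of_ne hne).symm
  · intro hadj
    refine ⟨hadj.ne, ?_⟩
    rcases hadj.ne.lt_or_gt with hvw | hwv
    · exact Or.inr (hG.parentOf_eq_of_adj hadj.symm hvw)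
    · exact Or.inl (hG.parentOf_eq_of_adj hadj hwv)

end IsIncreasingForest

lemma IsParentMap.parentOf_parentGraph {R : Finset (Fin n)} {f : Fin n → Fin n}
    (hf : IsParentMap R f) : parentOf (parentGraph f) = f := by
  funext v
  have hG := hf.isIncreasingForest
  by_cases hv : v ∈ R
  · rw [hG.parentOf_of_mem hv, hf.apply_of_mem hv]
  · obtain ⟨hadj, hlt⟩ := hG.adj_parentOf hv
    exact (hf.eq_of_adj_of_lt hadj hlt).symm

noncomputable def increasingForestEquivParentMap (R : Finset (Fin n)) :
    {G // IsIncreasingForest R G} ≃ {f // IsParentMap R f} where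
  toFun G := ⟨parentOf G, G.2.isParentMap_parentOf⟩
  invFun f := ⟨parentGraph f, f.2.isIncreasingForest⟩
  left_inv G := Subtype.ext G.2.parentGraph_parentOf
  right_inv f := Subtype.ext f.2.parentOf_parentGraph

lemma card_isParentMap (R : Finset (Fin n)) :
    Nat.card {f // IsParentMap R f} = ∏ v, if v ∈ R then 1 else (v : ℕ) := by
  calc Nat.card {f // IsParentMap R f}
      = ∏ v, Nat.card {w // if v ∈ R then w = v else w < v} :=
        (Nat.card_congr
          (Equiv.subtypePiEquivPi (p := fun v w => if v ∈ R then w = v else w < v))).trans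
            Nat.card_pi
    _ = _ := Finset.prod_congr rfl fun v _ => ?_
  split_ifs with hv
  · simp
  · simp [Nat.card_eq_fintype_card, Fintype.card_subtype, Finset.filter_gt_eq_Iio]

lemma isIncreasingForest_pair_iff {G : SimpleGraph (Fin n)} {a b : Fin n} (hab : a ≠ b) :
    IsIncreasingForest {a, b} G ↔ G.IsAcyclic ∧ Nat.card G.ConnectedComponent = 2 ∧
      ¬G.Reachable a b ∧ IncreasingFrom G a ∧ IncreasingFrom G b := by
  constructor
  · rintro ⟨hac, hroot, hnr, hinc⟩
    have hab' : ¬G.Reachable a b := hnr (by simp) (by simp) hab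
    exact ⟨hac, (card_connectedComponent_eq_two_iff hab').mpr fun v => by simpa using hroot v,
      hab', hinc a (by simp), hinc b (by simp)⟩
  · rintro ⟨hac, hcard, hab', ha, hb⟩
    refine ⟨hac, fun v => by simpa using (card_connectedComponent_eq_two_iff hab').mp hcard v,
      ?_, by simp [ha, hb]⟩
    rw [Finset.coe_pair, Set.pairwise_pair]
    exact fun _ => ⟨hab', fun h => hab' h.symm⟩

end Forests

/-- the number of forests on `{1,...,n}` (`n ≥ 2`) consisting of exactly two
trees, with vertices 1 and 2 (here `⟨0,_⟩`, `⟨1,_⟩`) in different trees, such that in each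
tree the labels strictly increase along every path from vertex 1 resp. vertex 2, is
`(n−1)!`. -/
theorem stmt_9 (n : ℕ) (hn : 2 ≤ n) :
    Nat.card {G : SimpleGraph (Fin n) //
      G.IsAcyclic ∧ Nat.card G.ConnectedComponent = 2 ∧
      ¬ G.Reachable ⟨0, by omega⟩ ⟨1, by omega⟩ ∧
      IncreasingFrom G ⟨0, by omega⟩ ∧ IncreasingFrom G ⟨1, by omega⟩} =
    Nat.factorial (n - 1) := by
  set R : Finset (Fin n) := {⟨0, by omega⟩, ⟨1, by omega⟩}
  have hroots : ∀ v : Fin n, (if v ∈ R then 1 else (v : ℕ)) = max 1 (v : ℕ) := by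
    intro v
    simp only [R, Finset.mem_insert, Finset.mem_singleton, Fin.ext_iff]
    split_ifs <;> omega
  calc _ = Nat.card {G // IsIncreasingForest R G} :=
        Nat.card_congr (Equiv.subtypeEquivRight fun G =>
          (isIncreasingForest_pair_iff (by simp [Fin.ext_iff])).symm)
    _ = Nat.card {f // IsParentMap R f} := Nat.card_congr (increasingForestEquivParentMap R)
    _ = ∏ i ∈ Finset.range n, max 1 i := by
        rw [card_isParentMap, ← Fin.prod_univ_eq_prod_range]
        exact Finset.prod_congr rfl fun v _ => hroots v
    _ = Nat.factorial (n - 1) := prod_range_max_one_eq_factorial n
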